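/- arXiv:1810.08204 — 2 statements merged into one kernel-verified Lean document; each statement's English description precedes it below -/
import Mathlib

section
/- Commutation criterion for string operators (Eq. (14)). Let δ be a configuration, F : (E → ZMod 2) → ℂ arbitrary, and (α_p, b_p) a plaquette. The string-type operator S = B(δ, F) commutes with the plaquette operator B(α_p, b_p) if and only if F(c + α_p) · b_p(c) = b_p(c + δ) · F(c) for every configuration c (the paper's constraint F_P(i ⊕ α^p) = (b_p(i ⊕ α^P)/b_p(i)) · F_P(i)). -/
/-! String operators compose to string operators: `B(α, F) ∘ B(β, G) = B(α + β, d ↦ F(d + β) G(d))`.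
Both orders of the product therefore have the same flip `δ + α_p`, and since a string operator
determines its coefficient function (evaluate it on basis vectors), the two products agree exactly
when their coefficient functions do, which is the stated identity. -/

/-- A plaquette: a flip pattern `α_p` together with a unit-modulus phase function `b_p`. -/
structure Plaquette (E : Type*) where
  flip : E → ZMod 2
  phase : (E → ZMod 2) → ℂ
  unit_phase : ∀ c, ‖phase c‖ = 1

/-- The string-type operator `B(α, F)`, acting on the Hilbert space
`H = EuclideanSpace ℂ (E → ZMod 2)` by `(B(α,F) ψ)(c) = F(c + α) ⬝ ψ(c + α)`,
i.e. `B(α,F) δ_c = F(c) • δ_{c+α}`. -/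
noncomputable def stringOp {E : Type*} [Fintype E] [DecidableEq E]
    (α : E → ZMod 2) (F : (E → ZMod 2) → ℂ) :
    EuclideanSpace ℂ (E → ZMod 2) →ₗ[ℂ] EuclideanSpace ℂ (E → ZMod 2) where
  toFun ψ := WithLp.toLp 2 (fun c => F (c + α) * ψ (c + α))
  map_add' ψ φ := by
    ext c
    simp [mul_add]
  map_smul' a ψ := by
    ext c
    simp [mul_comm, mul_left_comm, mul_assoc]


section StringOp

variable {E : Type*} [Fintype E] [DecidableEq E]

@[simp]
theorem stringOp_apply (α : E → ZMod 2) (F : (E → ZMod 2) → ℂ)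
    (ψ : EuclideanSpace ℂ (E → ZMod 2)) (c : E → ZMod 2) :
    stringOp α F ψ c = F (c + α) * ψ (c + α) :=
  rfl

theorem stringOp_apply_single_add (α : E → ZMod 2) (F : (E → ZMod 2) → ℂ) (c : E → ZMod 2) :
    stringOp α F (EuclideanSpace.single (c + α) 1) c = F (c + α) := by
  simp

theorem stringOp_injective (α : E → ZMod 2) : Function.Injective (stringOp (E := E) α) := by
  intro F G h
  funext d
  have h_eval := congrArg (· (d - α))
    (LinearMap.congr_fun h (EuclideanSpace.single (d - α + α) 1))
  rwa [stringOp_apply_single_add, stringOp_apply_single_add, sub_add_cancel] at h_eval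

/-- Composition of string operators; the shift `d + β` undoes the flip since `β + β = 0`. -/
theorem stringOp_comp (α β : E → ZMod 2) (F G : (E → ZMod 2) → ℂ) :
    stringOp α F ∘ₗ stringOp β G = stringOp (α + β) (fun d => F (d + β) * G d) := by
  ext ψ c
  simp only [LinearMap.comp_apply, stringOp_apply, ← add_assoc, add_assoc _ β β,
    ZModModule.add_self, add_zero, mul_assoc]

end StringOp

/-- Commutation criterion for string operators (Eq. (14)): the string-type operator
`S = B(δ, F)` commutes with the plaquette operator `B(α_p, b_p)` if and only if
`F(c + α_p) · b_p(c) = b_p(c + δ) · F(c)` for every configuration `c`. -/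
theorem stringOp_commute_plaquette_iff {E : Type*} [Fintype E] [DecidableEq E]
    (δ : E → ZMod 2) (F : (E → ZMod 2) → ℂ) (p : Plaquette E) :
    stringOp δ F ∘ₗ stringOp p.flip p.phase = stringOp p.flip p.phase ∘ₗ stringOp δ F ↔
      ∀ c : E → ZMod 2, F (c + p.flip) * p.phase c = p.phase (c + δ) * F c := by
  rw [stringOp_comp, stringOp_comp, add_comm p.flip δ, (stringOp_injective _).eq_iff, funext_iff]
end

section
/- Lemma 6 (propagation of the canonical condition). Let P be a finite set of plaquettes with unit-modulus phase functions, δ a configuration, F : (E → ZMod 2) → ℂ with |F(c)| = 1 for all c, and i a fixed configuration. Assume that for every finite list L of plaquettes from P (repetitions allowed): F(i + Σ_{p∈L} α_p) = θ_δ(i, L) · F(i) and F(i + δ + Σ_{p∈L} α_p) = θ_δ(i + δ, L) · F(i + δ). If F(i + δ) = conj(F(i)), then for every finite list L of plaquettes from P: F(i + δ + Σ_{p∈L} α_p) = conj(F(i + Σ_{p∈L} α_p)). -/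
/-- `theta δ i [p₁, …, p_m] = ∏_k b_{p_k}(i + δ + α_{p₁} + ⋯ + α_{p_{k-1}}) /
    b_{p_k}(i + α_{p₁} + ⋯ + α_{p_{k-1}})` (Eq. (21) of the paper). -/
noncomputable def theta {E : Type*} (δ : E → ZMod 2) :
    (E → ZMod 2) → List (Plaquette E) → ℂ
  | _, [] => 1
  | i, p :: L => (p.phase (i + δ) / p.phase i) * theta δ (i + p.flip) L

/-!
Since `δ + δ = 0`, shifting the base point by `δ` swaps numerator and denominator in every
factor of `θ_δ`, so `θ_δ(i + δ, L) = θ_δ(i, L)⁻¹ = conj θ_δ(i, L)`, the last step because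
`θ_δ` has modulus one. Comparing the two recursion relations then transports
`F(i + δ) = conj F(i)` along every list of plaquettes.
-/

section theta

variable {E : Type*} (δ : E → ZMod 2)

theorem norm_theta (i : E → ZMod 2) (L : List (Plaquette E)) : ‖theta δ i L‖ = 1 := by
  induction L generalizing i with
  | nil => simp [theta]
  | cons p L ih => simp [theta, p.unit_phase, ih]

theorem theta_add_self (i : E → ZMod 2) (L : List (Plaquette E)) :
    theta δ (i + δ) L = (theta δ i L)⁻¹ := by
  induction L generalizing i with
  | nil => simp [theta]
  | cons p L ih =>
    have hδδ : i + δ + δ = i := by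
      rw [add_assoc, show δ + δ = 0 from funext fun e ↦ CharTwo.add_self_eq_zero (δ e), add_zero]
    rw [theta, theta, hδδ, add_right_comm, ih, mul_inv, inv_div]

theorem theta_add_self_eq_conj (i : E → ZMod 2) (L : List (Plaquette E)) :
    theta δ (i + δ) L = starRingEnd ℂ (theta δ i L) := by
  rw [theta_add_self, Complex.inv_eq_conj (norm_theta δ i L)]

end theta

theorem canonical_condition_propagates_general {E : Type*}
    (P : Finset (Plaquette E)) (δ : E → ZMod 2)
    (F : (E → ZMod 2) → ℂ)
    (i : E → ZMod 2)
    (h1 : ∀ L : List (Plaquette E), (∀ p ∈ L, p ∈ P) →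
      F (i + (L.map Plaquette.flip).sum) = theta δ i L * F i)
    (h2 : ∀ L : List (Plaquette E), (∀ p ∈ L, p ∈ P) →
      F (i + δ + (L.map Plaquette.flip).sum) = theta δ (i + δ) L * F (i + δ))
    (hcanon : F (i + δ) = starRingEnd ℂ (F i)) :
    ∀ L : List (Plaquette E), (∀ p ∈ L, p ∈ P) →
      F (i + δ + (L.map Plaquette.flip).sum) =
        starRingEnd ℂ (F (i + (L.map Plaquette.flip).sum)) := by
  intro L hL
  rw [h2 L hL, h1 L hL, theta_add_self_eq_conj, hcanon, map_mul]

/-- Lemma 6 (propagation of the canonical condition): if `F` satisfies the θ-recursion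
relations at a fixed configuration `i` (and at `i + δ`) for all lists of plaquettes from
`P`, and `F(i + δ) = conj (F i)`, then the canonical condition propagates to the whole
configuration class of `i`. -/
theorem canonical_condition_propagates {E : Type*} [Fintype E] [DecidableEq E]
    (P : Finset (Plaquette E)) (δ : E → ZMod 2)
    (F : (E → ZMod 2) → ℂ) (hF : ∀ c, ‖F c‖ = 1)
    (i : E → ZMod 2)
    (h1 : ∀ L : List (Plaquette E), (∀ p ∈ L, p ∈ P) →
      F (i + (L.map Plaquette.flip).sum) = theta δ i L * F i)
    (h2 : ∀ L : List (Plaquette E), (∀ p ∈ L, p ∈ P) →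
      F (i + δ + (L.map Plaquette.flip).sum) = theta δ (i + δ) L * F (i + δ))
    (hcanon : F (i + δ) = starRingEnd ℂ (F i)) :
    ∀ L : List (Plaquette E), (∀ p ∈ L, p ∈ P) →
      F (i + δ + (L.map Plaquette.flip).sum) =
        starRingEnd ℂ (F (i + (L.map Plaquette.flip).sum)) :=
  canonical_condition_propagates_general P δ F i h1 h2 hcanon
end
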